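/- For every 0 < α < 2, with h̄(r) = ν'_α({x : |x| > r}) + r^{-2}·∫_{|x| ≤ r} x² dν'_α(x) + r^{-1}·|∫_{1 < |x| ≤ r} x dν'_α(x)|, one has limsup_{r → ∞} r^η·h̄(r) = ∞ for every η > 0; consequently the Pruitt index β̄ = sup{η ≥ 0 : limsup_{r → ∞} r^η·h̄(r) = 0} equals 0. -/

import Mathlib

open MeasureTheory Filter

/-- The Lévy measure `ν_α` of the `K_α` process: density
`x ↦ 1/((1+|x|)·log^{1+α}(1+|x|))` with respect to Lebesgue measure. -/
noncomputable def nuAlpha (α : ℝ) : Measure ℝ :=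
  volume.withDensity fun x =>
    ENNReal.ofReal (1 / ((1 + |x|) * Real.log (1 + |x|) ^ (1 + α)))

/-- The large-jump part `ν'_α`: restriction of `ν_α` to `{x : |x| > 1}`. -/
noncomputable def nuAlpha' (α : ℝ) : Measure ℝ :=
  (nuAlpha α).restrict {x : ℝ | 1 < |x|}

/-- The Pruitt index function
`h̄(r) = ν'_α({|x| > r}) + r⁻²·∫_{|x| ≤ r} x² dν'_α + r⁻¹·|∫_{1 < |x| ≤ r} x dν'_α|`. -/
noncomputable def hbar (α r : ℝ) : ℝ :=
  (nuAlpha' α {x : ℝ | r < |x|}).toReal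
    + (r ^ 2)⁻¹ * ∫ x in {x : ℝ | |x| ≤ r}, x ^ 2 ∂(nuAlpha' α)
    + r⁻¹ * |∫ x in {x : ℝ | 1 < |x| ∧ |x| ≤ r}, x ∂(nuAlpha' α)|

/-!
Only the tail term of `h̄` matters. Since `-α⁻¹ log (1 + x) ^ (-α)` is an antiderivative of the
density on `(0, ∞)`, for `r ≥ 1` one gets
`h̄ r ≥ ν'_α {|x| > r} ≥ ν_α (r, ∞) = α⁻¹ log (1 + r) ^ (-α)`;
here `ν'_α` is a finite measure (the density is even and integrable at `∞`), so the `toReal` in `h̄`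
is not a junk value. A negative power of `log (1 + r)` loses against any `r ^ η` with `η > 0`, so
`r ^ η h̄ r → ∞` and the limsup is `∞` for every `η > 0`, which leaves only `η = 0` in the set
defining the Pruitt index.
-/

open Real Set
open scoped Topology

noncomputable def nuAlphaDensity (α x : ℝ) : ℝ :=
  1 / ((1 + |x|) * log (1 + |x|) ^ (1 + α))

theorem nuAlpha_eq_withDensity (α : ℝ) :
    nuAlpha α = volume.withDensity fun x => ENNReal.ofReal (nuAlphaDensity α x) :=
  rfl

theorem nuAlphaDensity_nonneg (α x : ℝ) : 0 ≤ nuAlphaDensity α x := by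
  have hlog : 0 ≤ log (1 + |x|) := log_nonneg (by linarith [abs_nonneg x])
  unfold nuAlphaDensity
  have := rpow_nonneg hlog (1 + α)
  positivity

theorem nuAlphaDensity_neg (α x : ℝ) : nuAlphaDensity α (-x) = nuAlphaDensity α x := by
  simp only [nuAlphaDensity, abs_neg]

section

variable {α : ℝ}

theorem hasDerivAt_neg_inv_mul_log_one_add_rpow_neg (hα : α ≠ 0) {x : ℝ} (hx : 0 < x) :
    HasDerivAt (fun y => -α⁻¹ * log (1 + y) ^ (-α)) (nuAlphaDensity α x) x := by
  have hL : 0 < log (1 + x) := log_pos (by linarith)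
  have hlog : HasDerivAt (fun y => log (1 + y)) (1 + x)⁻¹ x := by
    simpa using ((hasDerivAt_id x).const_add 1).log (by positivity)
  refine ((hlog.rpow_const (p := -α) (Or.inl hL.ne')).const_mul (-α⁻¹)).congr_deriv ?_
  rw [nuAlphaDensity, abs_of_pos hx, show -α - 1 = -(1 + α) by ring, rpow_neg hL.le]
  field_simp

theorem tendsto_neg_inv_mul_log_one_add_rpow_neg_atTop (hα : 0 < α) :
    Tendsto (fun y : ℝ => -α⁻¹ * log (1 + y) ^ (-α)) atTop (𝓝 0) := by
  simpa using ((tendsto_rpow_neg_atTop hα).comp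
    (tendsto_log_atTop.comp (tendsto_atTop_add_const_left _ 1 tendsto_id))).const_mul (-α⁻¹)

theorem integrableOn_Ioi_nuAlphaDensity (hα : 0 < α) {r : ℝ} (hr : 0 < r) :
    IntegrableOn (nuAlphaDensity α) (Ioi r) :=
  integrableOn_Ioi_deriv_of_nonneg'
    (fun _ hx => hasDerivAt_neg_inv_mul_log_one_add_rpow_neg hα.ne' (hr.trans_le hx))
    (fun x _ => nuAlphaDensity_nonneg α x) (tendsto_neg_inv_mul_log_one_add_rpow_neg_atTop hα)

theorem integral_Ioi_nuAlphaDensity (hα : 0 < α) {r : ℝ} (hr : 0 < r) :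
    ∫ x in Ioi r, nuAlphaDensity α x = α⁻¹ * log (1 + r) ^ (-α) := by
  rw [integral_Ioi_of_hasDerivAt_of_nonneg'
    (fun _ hx => hasDerivAt_neg_inv_mul_log_one_add_rpow_neg hα.ne' (hr.trans_le hx))
    (fun x _ => nuAlphaDensity_nonneg α x) (tendsto_neg_inv_mul_log_one_add_rpow_neg_atTop hα)]
  ring

theorem integrableOn_nuAlphaDensity (hα : 0 < α) :
    IntegrableOn (nuAlphaDensity α) {x : ℝ | 1 < |x|} := by
  have hIoi := integrableOn_Ioi_nuAlphaDensity hα one_pos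
  have hIio : IntegrableOn (nuAlphaDensity α) (Iio (-1)) := by
    have := (Measure.measurePreserving_neg (volume : Measure ℝ)).integrableOn_comp_preimage
      (Homeomorph.neg ℝ).measurableEmbedding |>.2 hIoi
    simpa [Function.comp_def, nuAlphaDensity_neg] using this
  have hS : {x : ℝ | 1 < |x|} = Iio (-1) ∪ Ioi 1 := by
    ext x
    simp [lt_abs, lt_neg, or_comm]
  rw [hS]
  exact hIio.union hIoi

theorem isFiniteMeasure_nuAlpha' (hα : 0 < α) : IsFiniteMeasure (nuAlpha' α) := by
  rw [nuAlpha', nuAlpha_eq_withDensity,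
    restrict_withDensity (measurableSet_lt measurable_const measurable_abs)]
  exact isFiniteMeasure_withDensity_ofReal (integrableOn_nuAlphaDensity hα).2

theorem nuAlpha_Ioi (hα : 0 < α) {r : ℝ} (hr : 0 < r) :
    nuAlpha α (Ioi r) = ENNReal.ofReal (α⁻¹ * log (1 + r) ^ (-α)) := by
  rw [nuAlpha_eq_withDensity, withDensity_apply _ measurableSet_Ioi,
    ← integral_Ioi_nuAlphaDensity hα hr, ofReal_integral_eq_lintegral_ofReal
      (integrableOn_Ioi_nuAlphaDensity hα hr)
      (Eventually.of_forall fun x => nuAlphaDensity_nonneg α x)]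

theorem log_one_add_rpow_neg_le_nuAlpha'_tail (hα : 0 < α) {r : ℝ} (hr : 1 ≤ r) :
    α⁻¹ * log (1 + r) ^ (-α) ≤ (nuAlpha' α {x | r < |x|}).toReal := by
  have := isFiniteMeasure_nuAlpha' hα
  have hsub : Ioi r ⊆ {x : ℝ | r < |x|} ∩ {x | 1 < |x|} := fun x (hx : r < x) =>
    ⟨hx.trans_le (le_abs_self x), hr.trans_lt (hx.trans_le (le_abs_self x))⟩
  have hle : nuAlpha α (Ioi r) ≤ nuAlpha' α {x | r < |x|} := by
    rw [nuAlpha', Measure.restrict_apply (measurableSet_lt measurable_const measurable_abs)]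
    exact measure_mono hsub
  rw [nuAlpha_Ioi hα (by linarith)] at hle
  have hnn : 0 ≤ α⁻¹ * log (1 + r) ^ (-α) :=
    mul_nonneg (inv_nonneg.2 hα.le) (rpow_nonneg (log_nonneg (by linarith)) _)
  simpa [ENNReal.toReal_ofReal hnn] using ENNReal.toReal_mono (measure_ne_top _ _) hle

theorem log_one_add_rpow_neg_le_hbar (hα : 0 < α) {r : ℝ} (hr : 1 ≤ r) :
    α⁻¹ * log (1 + r) ^ (-α) ≤ hbar α r := by
  have hsq : 0 ≤ (r ^ 2)⁻¹ * ∫ x in {x : ℝ | |x| ≤ r}, x ^ 2 ∂nuAlpha' α :=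
    mul_nonneg (by positivity) (integral_nonneg fun x => sq_nonneg x)
  have hmean : 0 ≤ r⁻¹ * |∫ x in {x : ℝ | 1 < |x| ∧ |x| ≤ r}, x ∂nuAlpha' α| :=
    mul_nonneg (by positivity) (abs_nonneg _)
  have := log_one_add_rpow_neg_le_nuAlpha'_tail hα hr
  unfold hbar
  linarith

end

theorem tendsto_rpow_mul_log_one_add_rpow_neg_atTop {η : ℝ} (hη : 0 < η) (β : ℝ) :
    Tendsto (fun r : ℝ => r ^ η * log (1 + r) ^ (-β)) atTop atTop := by
  have hexp : Tendsto (fun r : ℝ => exp (η * log (1 + r)) / log (1 + r) ^ β) atTop atTop :=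
    (tendsto_exp_mul_div_rpow_atTop β η hη).comp
      (tendsto_log_atTop.comp (tendsto_atTop_add_const_left _ 1 tendsto_id))
  refine tendsto_atTop_mono' _ ?_ (hexp.const_mul_atTop (inv_pos.2 (rpow_pos_of_pos two_pos η)))
  filter_upwards [eventually_ge_atTop 1] with r hr
  have hL : 0 < log (1 + r) := log_pos (by linarith)
  -- `exp (η log (1 + r)) = (1 + r) ^ η ≤ (2 r) ^ η`
  have h2r : exp (η * log (1 + r)) ≤ 2 ^ η * r ^ η := by
    rw [mul_comm, ← rpow_def_of_pos (by linarith), ← mul_rpow zero_le_two (by linarith)]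
    exact rpow_le_rpow (by linarith) (by linarith) hη.le
  rw [rpow_neg hL.le, div_eq_mul_inv, ← mul_assoc]
  gcongr
  rwa [inv_mul_le_iff₀ (rpow_pos_of_pos two_pos η)]

theorem tendsto_rpow_mul_hbar_atTop {α η : ℝ} (hα : 0 < α) (hη : 0 < η) :
    Tendsto (fun r : ℝ => r ^ η * hbar α r) atTop atTop := by
  refine tendsto_atTop_mono' _ ?_
    ((tendsto_rpow_mul_log_one_add_rpow_neg_atTop hη α).const_mul_atTop (inv_pos.2 hα))
  filter_upwards [eventually_ge_atTop 1] with r hr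
  calc α⁻¹ * (r ^ η * log (1 + r) ^ (-α)) = r ^ η * (α⁻¹ * log (1 + r) ^ (-α)) := by ring
    _ ≤ r ^ η * hbar α r :=
      mul_le_mul_of_nonneg_left (log_one_add_rpow_neg_le_hbar hα hr) (by positivity)

theorem pruitt_index_eq_zero_general (α : ℝ) (hα0 : 0 < α) :
    (∀ η : ℝ, 0 < η →
      limsup (fun r : ℝ => ENNReal.ofReal (r ^ η * hbar α r)) atTop = ⊤) ∧
    sSup {η : ℝ | 0 ≤ η ∧
      limsup (fun r : ℝ => ENNReal.ofReal (r ^ η * hbar α r)) atTop = 0} = 0 := by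
  have hlimsup : ∀ η : ℝ, 0 < η →
      limsup (fun r : ℝ => ENNReal.ofReal (r ^ η * hbar α r)) atTop = ⊤ := fun η hη =>
    (ENNReal.tendsto_ofReal_atTop.comp (tendsto_rpow_mul_hbar_atTop hα0 hη)).limsup_eq
  refine ⟨hlimsup, le_antisymm (Real.sSup_nonpos fun η ⟨hη, hη0⟩ => ?_)
    (Real.sSup_nonneg fun η hη => hη.1)⟩
  by_contra! hpos
  simp [hlimsup η hpos] at hη0

/-- For every `0 < α < 2`, one has `limsup_{r → ∞} r^η·h̄(r) = ∞` for every `η > 0`;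
consequently the Pruitt index
`β̄ = sup {η ≥ 0 : limsup_{r → ∞} r^η·h̄(r) = 0}` equals `0`. -/
theorem pruitt_index_eq_zero (α : ℝ) (hα0 : 0 < α) (hα2 : α < 2) :
    (∀ η : ℝ, 0 < η →
      limsup (fun r : ℝ => ENNReal.ofReal (r ^ η * hbar α r)) atTop = ⊤) ∧
    sSup {η : ℝ | 0 ≤ η ∧
      limsup (fun r : ℝ => ENNReal.ofReal (r ^ η * hbar α r)) atTop = 0} = 0 :=
  pruitt_index_eq_zero_general α hα0
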